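/- arXiv:2005.06322 — 2 statements merged into one kernel-verified Lean document; each statement's English description precedes it below -/
import Mathlib

section
/- For every unbounded modulus function f there exists a weight function g (with g(n) → ∞ and n/g(n) ↛ 0) such that 𝒵(f) is a proper subset of 𝒵_g(f). -/
open Filter Set

/-- A modulus function: nonnegative, vanishing exactly at 0, subadditive,
non-decreasing, right continuous at 0 (all on `[0,∞)`). -/
def IsModulus (f : ℝ → ℝ) : Prop :=
  (∀ x : ℝ, 0 ≤ x → 0 ≤ f x) ∧
  (∀ x : ℝ, 0 ≤ x → (f x = 0 ↔ x = 0)) ∧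
  (∀ x y : ℝ, 0 ≤ x → 0 ≤ y → f (x + y) ≤ f x + f y) ∧
  (∀ x y : ℝ, 0 ≤ x → x ≤ y → f x ≤ f y) ∧
  ContinuousWithinAt f (Set.Ici 0) 0

/-- An unbounded modulus function. -/
def IsUnboundedModulus (f : ℝ → ℝ) : Prop :=
  IsModulus f ∧ Tendsto f atTop atTop

/-- A weight function `g : ℕ → [0,∞)` with `g n → ∞` and `n / g n ↛ 0`. -/
def IsWeight (g : ℕ → ℝ) : Prop :=
  (∀ n, 0 ≤ g n) ∧ Tendsto g atTop atTop ∧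
  ¬ Tendsto (fun n : ℕ => (n : ℝ) / g n) atTop (nhds 0)

open scoped Classical in
/-- `|A ∩ [1,n]|`. -/
noncomputable def cnt (A : Set ℕ) (n : ℕ) : ℕ :=
  ((Finset.Icc 1 n).filter (fun m => m ∈ A)).card

/-- The ideal `𝒵_g(f)` of sets whose `f`-density of weight `g` is zero
(for nonnegative sequences, `limsup = 0` is equivalent to convergence to `0`). -/
noncomputable def Zd (f : ℝ → ℝ) (g : ℕ → ℝ) : Set (Set ℕ) :=
  {A | Tendsto (fun n => f (cnt A n) / f (g n)) atTop (nhds 0)}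

/-!
Choose `s` strictly increasing with `f (s (k+1)) ≥ s k * f (2 s k)`, let `A` be the union of the
blocks `(s k, 2 s k]`, and let `g n = n` on the range of `s` and, off it, so large that
`f (g n) ≥ n * f n`. Since `g (s k) = s k`, `n / g n ↛ 0`. Subadditivity gives
`f |A ∩ [1, 2 s k]| ≥ f (s k) ≥ f (2 s k) / 2`, so `A ∉ 𝒵(f)`. But at `n = s (k+1)` only `2 s k`
elements of `A` have appeared, so the ratio there is at most `1 / s k`, and off the range of `s`
it is at most `1 / n`; hence `A ∈ 𝒵_g(f)`.
-/

open Topology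

theorem tendsto_of_tendsto_comp_of_tendsto_compl_range {α : Type*} {u : ℕ → α} {l : Filter α}
    {s : ℕ → ℕ} (hs : StrictMono s) (hrange : Tendsto (u ∘ s) atTop l)
    (hcompl : Tendsto u (atTop ⊓ 𝓟 (range s)ᶜ) l) : Tendsto u atTop l := by
  have hcomap : comap s atTop = atTop :=
    comap_embedding_atTop (fun _ _ => hs.le_iff_le) fun n => ⟨n, hs.id_le n⟩
  have hrange' : Tendsto u (atTop ⊓ 𝓟 (range s)) l := by
    rwa [← map_comap, hcomap, tendsto_map'_iff]
  simpa [← inf_sup_left, sup_principal] using hrange'.sup hcompl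

namespace IsModulus

variable {f : ℝ → ℝ}

theorem nonneg (hf : IsModulus f) {x : ℝ} (hx : 0 ≤ x) : 0 ≤ f x := hf.1 x hx

theorem pos (hf : IsModulus f) {x : ℝ} (hx : 0 < x) : 0 < f x :=
  (hf.nonneg hx.le).lt_of_ne fun h => hx.ne' ((hf.2.1 x hx.le).1 h.symm)

theorem mono (hf : IsModulus f) {x y : ℝ} (hx : 0 ≤ x) (hxy : x ≤ y) : f x ≤ f y :=
  hf.2.2.2.1 x y hx hxy

theorem two_mul_le (hf : IsModulus f) {x : ℝ} (hx : 0 ≤ x) : f (2 * x) ≤ 2 * f x := by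
  simpa [two_mul] using hf.2.2.1 x x hx hx

end IsModulus

theorem div_le_inv_of_le_of_mul_le {a b c d : ℝ} (hab : a ≤ b) (hb : 0 < b) (hc : 0 < c)
    (hd : c * b ≤ d) : a / d ≤ c⁻¹ := by
  rw [div_le_iff₀ ((mul_pos hc hb).trans_le hd)]
  calc a ≤ c⁻¹ * (c * b) := by rwa [inv_mul_cancel_left₀ hc.ne']
    _ ≤ c⁻¹ * d := by gcongr

theorem cnt_le_self (A : Set ℕ) (n : ℕ) : cnt A n ≤ n := by
  classical
  unfold cnt
  convert Finset.card_filter_le (Finset.Icc 1 n) _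
  simp

theorem cnt_le_of_forall_le {A : Set ℕ} {n m : ℕ} (h : ∀ a ∈ A, a ≤ n → a ≤ m) :
    cnt A n ≤ m := by
  classical
  unfold cnt
  calc _ ≤ (Finset.Icc 1 m).card := Finset.card_le_card fun a ha => by
          simp only [Finset.mem_filter, Finset.mem_Icc] at ha ⊢
          exact ⟨ha.1.1, h a ha.2 ha.1.2⟩
    _ = m := by simp

theorem sub_le_cnt_of_Ioc_subset {A : Set ℕ} {a b : ℕ} (h : Ioc a b ⊆ A) :
    b - a ≤ cnt A b := by
  classical
  unfold cnt
  calc b - a = (Finset.Ioc a b).card := by simp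
    _ ≤ _ := Finset.card_le_card fun x hx => by
          simp only [Finset.mem_Ioc, Finset.mem_filter, Finset.mem_Icc] at hx ⊢
          exact ⟨⟨by omega, hx.2⟩, h hx⟩

def doublingBlocks (s : ℕ → ℕ) : Set ℕ := ⋃ k, Ioc (s k) (2 * s k)

theorem le_cnt_doublingBlocks (s : ℕ → ℕ) (k : ℕ) :
    s k ≤ cnt (doublingBlocks s) (2 * s k) := by
  have := sub_le_cnt_of_Ioc_subset (A := doublingBlocks s)
    (subset_iUnion (fun j => Ioc (s j) (2 * s j)) k)
  omega

theorem cnt_doublingBlocks_succ_le {s : ℕ → ℕ} (hs : Monotone s) (k : ℕ) :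
    cnt (doublingBlocks s) (s (k + 1)) ≤ 2 * s k := by
  refine cnt_le_of_forall_le fun a ha hak => ?_
  obtain ⟨j, hj⟩ := mem_iUnion.1 ha
  rcases le_or_gt j k with hjk | hkj
  · have := hs hjk
    exact hj.2.trans (by omega)
  · have := hs (show k + 1 ≤ j from hkj)
    exact absurd hj.1 (by omega)

section

variable {f : ℝ → ℝ}

theorem Zd_subset_Zd (hf : IsModulus f) {g₁ g₂ : ℕ → ℝ}
    (h : ∀ᶠ n in atTop, 0 < g₁ n ∧ g₁ n ≤ g₂ n) : Zd f g₁ ⊆ Zd f g₂ := by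
  intro A hA
  refine squeeze_zero' ?_ ?_ hA
  · filter_upwards [h] with n hn
    exact div_nonneg (hf.nonneg (Nat.cast_nonneg _)) (hf.nonneg (hn.1.trans_le hn.2).le)
  · filter_upwards [h] with n hn
    exact div_le_div_of_nonneg_left (hf.nonneg (Nat.cast_nonneg _)) (hf.pos hn.1)
      (hf.mono hn.1.le hn.2)

theorem doublingBlocks_notMem_Zd (hf : IsModulus f) {s : ℕ → ℕ} (hpos : ∀ k, 0 < s k)
    (hs : Tendsto s atTop atTop) : doublingBlocks s ∉ Zd f (fun n => n) := by
  intro h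
  have hhalf : ∀ k,
      (1 / 2 : ℝ) ≤ f (cnt (doublingBlocks s) (2 * s k)) / f ((2 * s k : ℕ) : ℝ) := by
    intro k
    have hsk : (0 : ℝ) < s k := by exact_mod_cast hpos k
    rw [Nat.cast_mul, Nat.cast_two, le_div_iff₀ (hf.pos (by positivity))]
    calc 1 / 2 * f (2 * s k) ≤ f (s k) := by linarith [hf.two_mul_le hsk.le]
      _ ≤ f (cnt (doublingBlocks s) (2 * s k)) :=
        hf.mono hsk.le (by exact_mod_cast le_cnt_doublingBlocks s k)
  have h2s : Tendsto (fun k => 2 * s k) atTop atTop :=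
    tendsto_id.const_mul_atTop' two_pos |>.comp hs
  have := ge_of_tendsto' (h.comp h2s) hhalf
  norm_num at this

theorem doublingBlocks_mem_Zd (hf : IsModulus f) {s : ℕ → ℕ} (hs : StrictMono s)
    (hpos : ∀ k, 0 < s k) (hsf : ∀ k, (s k : ℝ) * f (2 * s k) ≤ f (s (k + 1))) {g : ℕ → ℝ}
    (hg : ∀ n : ℕ, (n : ℝ) ≤ g n)
    (hg_compl : ∀ n : ℕ, n ∉ range s → (n : ℝ) * f n ≤ f (g n)) : doublingBlocks s ∈ Zd f g := by
  have hnonneg : ∀ n, 0 ≤ f (cnt (doublingBlocks s) n) / f (g n) := fun n =>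
    div_nonneg (hf.nonneg (Nat.cast_nonneg _)) (hf.nonneg ((Nat.cast_nonneg n).trans (hg n)))
  have hinv : Tendsto (fun n : ℕ => (n : ℝ)⁻¹) atTop (𝓝 0) :=
    tendsto_inv_atTop_zero.comp tendsto_natCast_atTop_atTop
  refine tendsto_of_tendsto_comp_of_tendsto_compl_range hs ?_ ?_
  · rw [← tendsto_add_atTop_iff_nat 1]
    refine squeeze_zero (fun k => hnonneg _) (fun k => ?_) (hinv.comp hs.tendsto_atTop)
    have hsk : (0 : ℝ) < s k := by exact_mod_cast hpos k
    refine div_le_inv_of_le_of_mul_le (hf.mono (Nat.cast_nonneg _) ?_) (hf.pos (by positivity))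
      hsk ((hsf k).trans (hf.mono (Nat.cast_nonneg _) (hg _)))
    exact_mod_cast cnt_doublingBlocks_succ_le hs.monotone k
  · have hev : ∀ᶠ n in atTop ⊓ 𝓟 (range s)ᶜ, 1 ≤ n ∧ n ∉ range s :=
      ((eventually_ge_atTop 1).filter_mono inf_le_left).and
        (mem_inf_of_right (mem_principal_self _))
    refine squeeze_zero' (.of_forall fun n => hnonneg n) ?_ (hinv.mono_left inf_le_left)
    filter_upwards [hev] with n ⟨hn, hns⟩
    have hn' : (0 : ℝ) < n := by exact_mod_cast hn
    exact div_le_inv_of_le_of_mul_le (hf.mono (Nat.cast_nonneg _)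
      (by exact_mod_cast cnt_le_self _ n)) (hf.pos hn') hn' (hg_compl n hns)

theorem exists_strictMono_mul_le (hf : Tendsto (fun n : ℕ => f n) atTop atTop) :
    ∃ s : ℕ → ℕ, StrictMono s ∧ (∀ k, 0 < s k) ∧
      ∀ k, (s k : ℝ) * f (2 * s k) ≤ f (s (k + 1)) := by
  have hnext : ∀ a : ℕ, ∃ b, a < b ∧ (a : ℝ) * f (2 * a) ≤ f b := fun a =>
    ((eventually_gt_atTop a).and (hf.eventually_ge_atTop _)).exists
  choose next hlt hle using hnext
  have hs : StrictMono fun k => next^[k] 1 := strictMono_nat_of_lt_succ fun k => by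
    simpa only [Function.iterate_succ_apply'] using hlt _
  refine ⟨fun k => next^[k] 1, hs, fun k => one_pos.trans_le (hs.monotone k.zero_le), fun k => ?_⟩
  simpa only [Function.iterate_succ_apply'] using hle _

theorem isWeight_of_le_of_frequently_eq {g : ℕ → ℝ} (hle : ∀ n : ℕ, (n : ℝ) ≤ g n)
    (hfreq : ∃ᶠ n in atTop, g n = n) : IsWeight g := by
  refine ⟨fun n => (Nat.cast_nonneg n).trans (hle n),
    tendsto_atTop_mono hle tendsto_natCast_atTop_atTop, fun h => ?_⟩
  obtain ⟨n, hgn, hn, hlt⟩ :=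
    (hfreq.and_eventually
      ((eventually_gt_atTop 0).and (h.eventually (gt_mem_nhds one_pos)))).exists
  rw [hgn, div_self (Nat.cast_pos.2 hn).ne'] at hlt
  exact hlt.false

end

theorem stmt6 (f : ℝ → ℝ) (hf : IsUnboundedModulus f) :
    ∃ g : ℕ → ℝ, IsWeight g ∧ Zd f (fun n => (n : ℝ)) ⊂ Zd f g := by
  classical
  obtain ⟨hmod, htop⟩ := hf
  obtain ⟨s, hs, hpos, hsf⟩ := exists_strictMono_mul_le (htop.comp tendsto_natCast_atTop_atTop)
  have hbig : ∀ n : ℕ, ∃ y : ℝ, n ≤ y ∧ n * f n ≤ f y := fun n =>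
    ((eventually_ge_atTop _).and (htop.eventually_ge_atTop _)).exists
  choose G hGle hGf using hbig
  set g : ℕ → ℝ := fun n => if n ∈ range s then n else G n
  have hg : ∀ n : ℕ, (n : ℝ) ≤ g n := fun n => by
    by_cases hn : n ∈ range s
    · simp only [g, if_pos hn, le_rfl]
    · simp only [g, if_neg hn, hGle n]
  have hg_compl : ∀ n : ℕ, n ∉ range s → (n : ℝ) * f n ≤ f (g n) := fun n hn => by
    simpa only [g, if_neg hn] using hGf n
  have hg_range : ∃ᶠ n in atTop, g n = n :=
    (Nat.frequently_atTop_iff_infinite.2 (infinite_range_of_injective hs.injective)).mono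
      fun n hn => if_pos hn
  refine ⟨g, isWeight_of_le_of_frequently_eq hg hg_range, ?_, fun hsub => ?_⟩
  · exact Zd_subset_Zd hmod ((eventually_gt_atTop 0).mono fun n hn => ⟨Nat.cast_pos.2 hn, hg n⟩)
  · exact doublingBlocks_notMem_Zd hmod hpos hs.tendsto_atTop
      (hsub (doublingBlocks_mem_Zd hmod hs hpos hsf hg hg_compl))
end

section
/- For every unbounded modulus function f, weight function g, and arithmetic sequence (a_n), the subgroup t^{f,g}_{(a_n)}(𝕋) strictly contains the classical characterized subgroup t_{(a_n)}(𝕋) = {x ∈ 𝕋 : ‖a_n x‖ → 0}. -/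
open Filter Set

/-- The `f^g`-statistically characterized subgroup `t^{f,g}_{(a_n)}(𝕋)`. -/
noncomputable def statChar (f : ℝ → ℝ) (g : ℕ → ℝ) (a : ℕ → ℤ) :
    Set (AddCircle (1 : ℝ)) :=
  {x | ∀ ε > 0, {n : ℕ | ε ≤ ‖(a n) • x‖} ∈ Zd f g}

/-- An arithmetic sequence: `a 0 = 1`, strictly increasing, `a n ∣ a (n+1)`,
and all ratios `q_n ≥ 2`. -/
def IsArith (a : ℕ → ℕ) : Prop :=
  a 0 = 1 ∧ StrictMono a ∧ (∀ n, a n ∣ a (n + 1)) ∧ (∀ n, 2 * a n ≤ a (n + 1))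

/-- Canonical representation `x = Σ_{n≥1} c_n / a_n` with `0 ≤ c_n ≤ q_n - 1`
and `c_n < q_n - 1` infinitely often; here `q_n = a n / a (n-1)`. -/
def IsCanonRep (a : ℕ → ℕ) (c : ℕ → ℕ) (x : AddCircle (1 : ℝ)) : Prop :=
  c 0 = 0 ∧ (∀ n, 1 ≤ n → c n ≤ a n / a (n - 1) - 1) ∧
  (∀ N, ∃ n, N ≤ n ∧ c n < a n / a (n - 1) - 1) ∧
  x = ((∑' n, (c n : ℝ) / (a n : ℝ) : ℝ) : AddCircle (1 : ℝ))

/-!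
If `‖a_n x‖ → 0`, each set `{n | ‖a_n x‖ ≥ ε}` is finite, and finite sets have `f`-density of
weight `g` zero because `f (g n) → ∞`.

For the strictness, choose a lacunary sequence `φ` of indices, sparse enough that
`f (g n) ≥ k²` as soon as `n ≥ φ k`, and put `x = ∑ₖ ⌊q/2⌋ / a_{φ k + 1}` with
`q = a_{φ k + 1} / a_{φ k}`. Modulo `1`, `a_{φ k} x` is `⌊q/2⌋ / q ∈ [1/4, 1/2]` plus a tail in
`[0, 1/4]`, so `‖a_{φ k} x‖ ≥ 1/4` and `x ∉ t_{(a_n)}(𝕋)`. On the other hand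
`‖a_m x‖ ≤ 2^{-(φ K - m)}` for the first `φ K ≥ m`, so `‖a_m x‖ ≥ ε` only for the `m` lying
within a fixed distance `M(ε)` below some `φ k`. Up to `n` there are at most `M (κ + M + 1)` of
them, where `κ` is the largest index with `φ κ ≤ n`, while `f` is subadditive and
`f (g n) ≥ κ²`.
-/

namespace IsModulus

variable {f : ℝ → ℝ} (hf : IsModulus f)
include hf

theorem natCast_le_mul (t : ℕ) : f t ≤ t * f 1 := by
  induction t with
  | zero => simp [(hf.2.1 0 le_rfl).2 rfl]
  | succ t ih =>
    have := hf.2.2.1 t 1 t.cast_nonneg zero_le_one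
    push_cast
    linarith

end IsModulus

theorem cnt_mono {A B : Set ℕ} (hAB : A ⊆ B) (n : ℕ) : cnt A n ≤ cnt B n :=
  Finset.card_le_card fun m hm => by
    simp only [Finset.mem_filter] at hm ⊢
    exact ⟨hm.1, hAB hm.2⟩

open scoped Classical in
theorem cnt_le_card_toFinset {A : Set ℕ} (hA : A.Finite) (n : ℕ) : cnt A n ≤ hA.toFinset.card :=
  Finset.card_le_card fun m hm => by simpa using (Finset.mem_filter.1 hm).2

section Zd

variable {f : ℝ → ℝ} {g : ℕ → ℝ} {A B : Set ℕ}

theorem mem_Zd_of_cnt_le (hf : IsModulus f) {c : ℕ → ℝ} (hc : ∀ n, (cnt A n : ℝ) ≤ c n)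
    (hlim : Tendsto (fun n => c n / f (g n)) atTop (nhds 0)) : A ∈ Zd f g := by
  refine squeeze_zero_norm (a := fun n => f 1 * ‖c n / f (g n)‖) (fun n => ?_)
    (by simpa using hlim.norm.const_mul (f 1))
  have hf1 : 0 ≤ f 1 := hf.1 1 zero_le_one
  have hcnt : f (cnt A n) ≤ f 1 * c n := by
    nlinarith [hf.natCast_le_mul (cnt A n), hc n]
  rw [norm_div, norm_div, Real.norm_of_nonneg (hf.1 _ (Nat.cast_nonneg _)),
    Real.norm_of_nonneg ((Nat.cast_nonneg _).trans (hc n)), mul_div_assoc']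
  gcongr

theorem mem_Zd_of_subset (hf : IsModulus f) (hAB : A ⊆ B) (hB : B ∈ Zd f g) : A ∈ Zd f g := by
  refine squeeze_zero_norm (fun n => ?_) (tendsto_zero_iff_norm_tendsto_zero.1 hB)
  have hA0 := hf.1 _ (Nat.cast_nonneg (cnt A n))
  have hAB' : f (cnt A n) ≤ f (cnt B n) :=
    hf.2.2.2.1 _ _ (Nat.cast_nonneg _) (by exact_mod_cast cnt_mono hAB n)
  rw [norm_div, norm_div, Real.norm_of_nonneg hA0, Real.norm_of_nonneg (hA0.trans hAB')]
  gcongr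

theorem mem_Zd_of_finite (hf : IsModulus f) (hfg : Tendsto (fun n => f (g n)) atTop atTop)
    (hA : A.Finite) : A ∈ Zd f g :=
  mem_Zd_of_cnt_le hf (c := fun _ => hA.toFinset.card)
    (fun n => by exact_mod_cast cnt_le_card_toFinset hA n) (tendsto_const_nhds.div_atTop hfg)

end Zd


def lowerThickening (φ : ℕ → ℕ) (M : ℕ) : Set ℕ :=
  {m | ∃ k, m ≤ φ k ∧ φ k < m + M}

section lowerThickening

variable {φ : ℕ → ℕ}

theorem strictMono_of_add_two_le (hgap : ∀ k, φ k + 2 ≤ φ (k + 1)) : StrictMono φ :=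
  strictMono_nat_of_lt_succ fun k => by have := hgap k; omega

theorem exists_add_two_le_forall_le (N : ℕ → ℕ) :
    ∃ φ : ℕ → ℕ, (∀ k, φ k + 2 ≤ φ (k + 1)) ∧ ∀ k, N k ≤ φ k :=
  ⟨fun k => ∑ j ∈ Finset.range (k + 1), (N j + 2),
    fun k => by dsimp only; rw [Finset.sum_range_succ _ (k + 1)]; omega,
    fun k => by dsimp only; rw [Finset.sum_range_succ]; omega⟩

theorem lt_apply_findGreatest_succ (hφ : StrictMono φ) (n : ℕ) :
    n < φ (Nat.findGreatest (fun k => φ k ≤ n) n + 1) := by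
  by_contra! h
  by_cases hle : Nat.findGreatest (fun k => φ k ≤ n) n + 1 ≤ n
  · exact Nat.findGreatest_is_greatest (lt_add_one _) hle h
  · have := hφ.le_apply (x := Nat.findGreatest (fun k => φ k ≤ n) n + 1)
    omega

open scoped Classical in
theorem cnt_lowerThickening_le (hφ : StrictMono φ) (M n : ℕ) :
    cnt (lowerThickening φ M) n ≤ (Nat.findGreatest (fun k => φ k ≤ n) n + M + 1) * M := by
  have hκ := lt_apply_findGreatest_succ hφ n
  set κ := Nat.findGreatest (fun k => φ k ≤ n) n
  have hsub : (Finset.Icc 1 n).filter (fun m => m ∈ lowerThickening φ M) ⊆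
      (Finset.range (κ + M + 1)).biUnion fun k => Finset.Ioc (φ k - M) (φ k) := by
    intro m hm
    simp only [Finset.mem_filter, Finset.mem_Icc] at hm
    obtain ⟨⟨hm1, hmn⟩, k, hmk, hkm⟩ := hm
    have hshift := hφ.add_le_nat M (κ + 1)
    have hk : k < κ + M + 1 := by
      by_contra! hk
      have := hφ.monotone (show M + (κ + 1) ≤ k by omega)
      omega
    simp only [Finset.mem_biUnion, Finset.mem_range, Finset.mem_Ioc]
    exact ⟨k, hk, by omega, hmk⟩
  calc cnt (lowerThickening φ M) n ≤ _ := Finset.card_le_card hsub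
    _ ≤ (Finset.range (κ + M + 1)).card * M :=
        Finset.card_biUnion_le_card_mul _ _ _ fun k _ => by rw [Nat.card_Ioc]; omega
    _ = (κ + M + 1) * M := by rw [Finset.card_range]

theorem lowerThickening_mem_Zd {f : ℝ → ℝ} {g : ℕ → ℝ} (hf : IsModulus f) (hφ : StrictMono φ)
    (hgrowth : ∀ k n, φ k ≤ n → (k : ℝ) ^ 2 ≤ f (g n)) (M : ℕ) :
    lowerThickening φ M ∈ Zd f g := by
  set κ : ℕ → ℕ := fun n => Nat.findGreatest (fun k => φ k ≤ n) n
  have hκ : Tendsto κ atTop atTop := tendsto_atTop.2 fun k =>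
    eventually_atTop.2 ⟨φ k, fun n hn => Nat.le_findGreatest ((hφ.id_le k).trans hn) hn⟩
  refine mem_Zd_of_cnt_le hf (c := fun n => (κ n + M + 1) * M)
    (fun n => by exact_mod_cast cnt_lowerThickening_le hφ M n) ?_
  refine squeeze_zero_norm' ?_ ((tendsto_const_div_atTop_nhds_zero_nat (((M : ℝ) + 2) * M)).comp hκ)
  filter_upwards [hκ.eventually_ge_atTop 1] with n hn
  have hfg : (κ n : ℝ) ^ 2 ≤ f (g n) := hgrowth _ _
    (Nat.findGreatest_of_ne_zero (P := fun k => φ k ≤ n) rfl (Nat.one_le_iff_ne_zero.1 hn))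
  have hκ1 : (1 : ℝ) ≤ κ n := by exact_mod_cast hn
  have hfg0 : 0 < f (g n) := by nlinarith
  rw [Real.norm_of_nonneg (by positivity), Function.comp_apply,
    div_le_div_iff₀ hfg0 (by positivity)]
  have hM : (0 : ℝ) ≤ M := M.cast_nonneg
  calc ((κ n : ℝ) + M + 1) * M * κ n ≤ (M + 2) * M * (κ n) ^ 2 := by
        nlinarith [mul_nonneg (mul_nonneg hM (by linarith : (0 : ℝ) ≤ κ n)) (sub_nonneg.2 hκ1)]
    _ ≤ (M + 2) * M * f (g n) := by gcongr

end lowerThickening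

noncomputable def halfDigit (a : ℕ → ℕ) (n : ℕ) : ℝ :=
  (a (n + 1) / a n / 2 : ℕ) / a (n + 1)

theorem halfDigit_nonneg (a : ℕ → ℕ) (n : ℕ) : 0 ≤ halfDigit a n := by
  unfold halfDigit; positivity

namespace IsArith

variable {a : ℕ → ℕ} (ha : IsArith a)
include ha

theorem pos (n : ℕ) : 0 < a n :=
  (ha.1 ▸ Nat.one_pos : 0 < a 0).trans_le (ha.2.1.monotone n.zero_le)

theorem dvd_of_le {m n : ℕ} (h : m ≤ n) : a m ∣ a n := by
  induction n, h using Nat.le_induction with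
  | base => rfl
  | succ n _ ih => exact ih.trans (ha.2.2.1 n)

theorem two_pow_mul_le (m t : ℕ) : 2 ^ t * a m ≤ a (m + t) := by
  induction t with
  | zero => simp
  | succ t ih =>
    rw [pow_succ, mul_right_comm, ← add_assoc]
    exact (Nat.mul_le_mul_right 2 ih).trans (mul_comm (a (m + t)) 2 ▸ ha.2.2.2 (m + t))

theorem div_le_half_pow {m n : ℕ} (h : m ≤ n) : (a m : ℝ) / a n ≤ (1 / 2) ^ (n - m) := by
  have hle : ((2 ^ (n - m) * a m : ℕ) : ℝ) ≤ a n := by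
    exact_mod_cast Nat.add_sub_cancel' h ▸ ha.two_pow_mul_le m (n - m)
  rw [div_le_iff₀ (by exact_mod_cast ha.pos n), one_div_pow, div_mul_eq_mul_div,
    le_div_iff₀ (by positivity)]
  push_cast at hle
  linarith

theorem ratio_mul (n : ℕ) : a (n + 1) / a n * a n = a (n + 1) :=
  Nat.div_mul_cancel (ha.2.2.1 n)

theorem two_le_ratio (n : ℕ) : 2 ≤ a (n + 1) / a n :=
  (Nat.le_div_iff_mul_le (ha.pos n)).2 (ha.2.2.2 n)

theorem mul_halfDigit_le {m n : ℕ} (h : m ≤ n) :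
    (a m : ℝ) * halfDigit a n ≤ (1 / 2) ^ (n - m) / 2 := by
  have hq : ((2 * (a (n + 1) / a n / 2) * a n : ℕ) : ℝ) ≤ a (n + 1) := by
    exact_mod_cast (Nat.mul_le_mul_right _ (Nat.mul_div_le _ 2)).trans_eq (ha.ratio_mul n)
  have hn : (0 : ℝ) < a n := by exact_mod_cast ha.pos n
  have hn1 : (0 : ℝ) < a (n + 1) := by exact_mod_cast ha.pos (n + 1)
  have hdigit : (a m : ℝ) * halfDigit a n ≤ (a m : ℝ) / a n / 2 := by
    unfold halfDigit
    push_cast at hq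
    rw [mul_div_assoc', div_le_iff₀ hn1, div_div, div_mul_eq_mul_div, le_div_iff₀ (by positivity)]
    have hm : (0 : ℝ) ≤ a m := Nat.cast_nonneg _
    nlinarith
  linarith [ha.div_le_half_pow h]

theorem quarter_le_mul_halfDigit (n : ℕ) : 1 / 4 ≤ (a n : ℝ) * halfDigit a n := by
  have hq : (a (n + 1) : ℝ) ≤ ((4 * (a (n + 1) / a n / 2) * a n : ℕ) : ℝ) := by
    have h2 := ha.two_le_ratio n
    exact_mod_cast (ha.ratio_mul n).symm.trans_le (Nat.mul_le_mul_right _ (by omega))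
  have hn1 : (0 : ℝ) < a (n + 1) := by exact_mod_cast ha.pos (n + 1)
  unfold halfDigit
  push_cast at hq
  rw [mul_div_assoc', le_div_iff₀ hn1]
  linarith

theorem mul_halfDigit_eq_natCast {m n : ℕ} (h : n < m) :
    (a m : ℝ) * halfDigit a n = ((a (n + 1) / a n / 2 * (a m / a (n + 1)) : ℕ) : ℝ) := by
  have hn1 : (a (n + 1) : ℝ) ≠ 0 := by exact_mod_cast (ha.pos (n + 1)).ne'
  rw [Nat.cast_mul, Nat.cast_div (ha.dvd_of_le h) hn1, halfDigit]
  field_simp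

end IsArith

theorem quarter_le_norm_coe {y : ℝ} (h₁ : 1 / 4 ≤ y) (h₂ : y ≤ 3 / 4) :
    1 / 4 ≤ ‖(y : UnitAddCircle)‖ := by
  rw [UnitAddCircle.norm_eq]
  rcases le_or_gt (round y : ℝ) 0 with h | h
  · rw [abs_of_nonneg (by linarith)]; linarith
  · have : (1 : ℝ) ≤ round y := by exact_mod_cast h
    rw [abs_of_nonpos (by linarith)]; linarith

noncomputable def lacunaryPoint (a φ : ℕ → ℕ) : AddCircle (1 : ℝ) :=
  ↑(∑' k, halfDigit a (φ k))

namespace IsArith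

variable {a φ : ℕ → ℕ} (ha : IsArith a)
include ha

theorem summable_halfDigit_comp (hφ : StrictMono φ) : Summable fun k => halfDigit a (φ k) := by
  refine .of_nonneg_of_le (fun k => halfDigit_nonneg a _) (fun k => ?_) summable_geometric_two
  have hk := ha.mul_halfDigit_le (Nat.zero_le (φ k))
  rw [ha.1, Nat.cast_one, one_mul, Nat.sub_zero] at hk
  have hφk : ((1 : ℝ) / 2) ^ φ k ≤ (1 / 2) ^ k :=
    pow_le_pow_of_le_one (by norm_num) (by norm_num) (hφ.id_le k)
  linarith [pow_nonneg (by norm_num : (0 : ℝ) ≤ 1 / 2) (φ k)]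

theorem mul_tsum_halfDigit_le (hφ : StrictMono φ) {m K : ℕ} (h : m ≤ φ K) :
    (a m : ℝ) * ∑' j, halfDigit a (φ (j + K)) ≤ (1 / 2) ^ (φ K - m) := by
  have hterm (j : ℕ) :
      (a m : ℝ) * halfDigit a (φ (j + K)) ≤ (1 / 2) ^ (φ K - m) / 2 * (1 / 2) ^ j := by
    have hjK := hφ.add_le_nat j K
    calc (a m : ℝ) * halfDigit a (φ (j + K)) ≤ (1 / 2) ^ (φ (j + K) - m) / 2 :=
          ha.mul_halfDigit_le (by omega)
      _ ≤ (1 / 2) ^ (φ K - m + j) / 2 := by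
          exact div_le_div_of_nonneg_right
            (pow_le_pow_of_le_one (by norm_num) (by norm_num) (by omega)) zero_le_two
      _ = (1 / 2) ^ (φ K - m) / 2 * (1 / 2) ^ j := by rw [pow_add]; ring
  have hsum : Summable fun j => halfDigit a (φ (j + K)) :=
    (summable_nat_add_iff K).2 (summable_halfDigit_comp ha hφ)
  calc (a m : ℝ) * ∑' j, halfDigit a (φ (j + K))
      = ∑' j, (a m : ℝ) * halfDigit a (φ (j + K)) := tsum_mul_left.symm
    _ ≤ ∑' j : ℕ, (1 / 2 : ℝ) ^ (φ K - m) / 2 * (1 / 2) ^ j :=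
        (hsum.mul_left _).tsum_le_tsum hterm (summable_geometric_two.mul_left _)
    _ = (1 / 2) ^ (φ K - m) := by rw [tsum_mul_left, tsum_geometric_two]; ring

theorem zsmul_lacunaryPoint (hφ : StrictMono φ) {m K : ℕ} (h : ∀ j < K, φ j < m) :
    (a m : ℤ) • lacunaryPoint a φ = ↑((a m : ℝ) * ∑' j, halfDigit a (φ (j + K))) := by
  have hhead : ((∑ j ∈ Finset.range K, (a m : ℝ) * halfDigit a (φ j) : ℝ) : UnitAddCircle) = 0 := by
    rw [Finset.sum_congr rfl fun j hj => ha.mul_halfDigit_eq_natCast (h j (Finset.mem_range.1 hj)),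
      ← Nat.cast_sum]
    rw [← nsmul_one, AddCircle.coe_nsmul, AddCircle.coe_period, smul_zero]
  rw [lacunaryPoint, ← AddCircle.coe_zsmul, zsmul_eq_mul, Int.cast_natCast,
    ← (summable_halfDigit_comp ha hφ).sum_add_tsum_nat_add K, mul_add, Finset.mul_sum,
    AddCircle.coe_add, hhead, zero_add]

theorem exists_norm_zsmul_lacunaryPoint_le (hφ : StrictMono φ) (m : ℕ) :
    ∃ K, m ≤ φ K ∧ ‖(a m : ℤ) • lacunaryPoint a φ‖ ≤ (1 / 2) ^ (φ K - m) := by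
  have hex : ∃ K, m ≤ φ K := ⟨m, hφ.id_le m⟩
  refine ⟨Nat.find hex, Nat.find_spec hex, ?_⟩
  rw [zsmul_lacunaryPoint ha hφ fun j hj => not_le.1 (Nat.find_min hex hj)]
  have h0 : 0 ≤ (a m : ℝ) * ∑' j, halfDigit a (φ (j + Nat.find hex)) :=
    mul_nonneg (Nat.cast_nonneg _) (tsum_nonneg fun _ => halfDigit_nonneg a _)
  exact QuotientAddGroup.norm_mk_le_norm.trans
    ((Real.norm_of_nonneg h0).trans_le (mul_tsum_halfDigit_le ha hφ (Nat.find_spec hex)))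

theorem quarter_le_norm_zsmul_lacunaryPoint (hgap : ∀ k, φ k + 2 ≤ φ (k + 1)) (k : ℕ) :
    1 / 4 ≤ ‖(a (φ k) : ℤ) • lacunaryPoint a φ‖ := by
  have hφ := strictMono_of_add_two_le hgap
  have hsum : Summable fun j => halfDigit a (φ (j + k)) :=
    (summable_nat_add_iff k).2 (summable_halfDigit_comp ha hφ)
  have hshift : ∑' j, halfDigit a (φ (j + 1 + k)) = ∑' j, halfDigit a (φ (j + (k + 1))) := by
    simp only [add_right_comm _ 1 k, add_assoc]
  have hdigit := ha.quarter_le_mul_halfDigit (φ k)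
  have hdigit' : (a (φ k) : ℝ) * halfDigit a (φ k) ≤ 1 / 2 := by
    simpa using ha.mul_halfDigit_le (le_refl (φ k))
  have htail := mul_tsum_halfDigit_le ha hφ (hφ.monotone k.le_succ) (m := φ k)
  have hgap' : ((1 : ℝ) / 2) ^ (φ (k + 1) - φ k) ≤ (1 / 2) ^ 2 :=
    pow_le_pow_of_le_one (by norm_num) (by norm_num) (by have := hgap k; omega)
  have htail0 : 0 ≤ (a (φ k) : ℝ) * ∑' j, halfDigit a (φ (j + (k + 1))) :=
    mul_nonneg (Nat.cast_nonneg _) (tsum_nonneg fun _ => halfDigit_nonneg a _)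
  rw [zsmul_lacunaryPoint ha hφ fun j hj => hφ hj, hsum.tsum_eq_zero_add, zero_add, hshift, mul_add]
  exact quarter_le_norm_coe (by linarith) (by linarith)

end IsArith

theorem lacunaryPoint_mem_statChar {f : ℝ → ℝ} {g : ℕ → ℝ} {a φ : ℕ → ℕ} (hf : IsModulus f)
    (ha : IsArith a) (hφ : StrictMono φ) (hgrowth : ∀ k n, φ k ≤ n → (k : ℝ) ^ 2 ≤ f (g n)) :
    lacunaryPoint a φ ∈ statChar f g (fun n => (a n : ℤ)) := by
  intro ε hε
  obtain ⟨M, hM⟩ := exists_pow_lt_of_lt_one hε (by norm_num : (1 : ℝ) / 2 < 1)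
  refine mem_Zd_of_subset hf (fun m hm => ?_) (lowerThickening_mem_Zd hf hφ hgrowth M)
  obtain ⟨K, hmK, hK⟩ := ha.exists_norm_zsmul_lacunaryPoint_le hφ m
  have hlt : ((1 : ℝ) / 2) ^ M < (1 / 2) ^ (φ K - m) := hM.trans_le (le_trans hm hK)
  rw [pow_lt_pow_iff_right_of_lt_one₀ (by norm_num) (by norm_num)] at hlt
  exact ⟨K, hmK, by omega⟩

theorem not_tendsto_norm_zsmul_lacunaryPoint {a φ : ℕ → ℕ} (ha : IsArith a)
    (hgap : ∀ k, φ k + 2 ≤ φ (k + 1)) :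
    ¬ Tendsto (fun n => ‖(a n : ℤ) • lacunaryPoint a φ‖) atTop (nhds 0) := by
  intro h
  have hlim := h.comp (strictMono_of_add_two_le hgap).tendsto_atTop
  obtain ⟨k, hk⟩ := (hlim.eventually (gt_mem_nhds (by norm_num : (0 : ℝ) < 1 / 4))).exists
  exact (ha.quarter_le_norm_zsmul_lacunaryPoint hgap k).not_gt hk

theorem setOf_tendsto_subset_statChar {f : ℝ → ℝ} {g : ℕ → ℝ} (hf : IsModulus f)
    (hfg : Tendsto (fun n => f (g n)) atTop atTop) (a : ℕ → ℤ) :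
    {x : AddCircle (1 : ℝ) | Tendsto (fun n => ‖a n • x‖) atTop (nhds 0)} ⊆ statChar f g a := by
  intro x hx ε hε
  have hfin := hx.eventually (gt_mem_nhds hε)
  rw [← Nat.cofinite_eq_atTop, eventually_cofinite] at hfin
  exact mem_Zd_of_finite hf hfg (by simpa using hfin)

theorem stmt14 (f : ℝ → ℝ) (hf : IsUnboundedModulus f) (g : ℕ → ℝ) (hg : IsWeight g)
    (a : ℕ → ℕ) (ha : IsArith a) :
    {x : AddCircle (1 : ℝ) | Tendsto (fun n => ‖((a n : ℤ)) • x‖) atTop (nhds 0)} ⊂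
      statChar f g (fun n => (a n : ℤ)) := by
  obtain ⟨hf, hf_top⟩ := hf
  have hfg : Tendsto (fun n => f (g n)) atTop atTop := hf_top.comp hg.2.1
  choose N hN using fun k : ℕ => eventually_atTop.1 (hfg.eventually_ge_atTop ((k : ℝ) ^ 2))
  obtain ⟨φ, hgap, hNφ⟩ := exists_add_two_le_forall_le N
  have hgrowth (k n : ℕ) (hn : φ k ≤ n) : (k : ℝ) ^ 2 ≤ f (g n) := hN k n ((hNφ k).trans hn)
  refine (ssubset_iff_of_subset (setOf_tendsto_subset_statChar hf hfg _)).2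
    ⟨lacunaryPoint a φ, ?_, not_tendsto_norm_zsmul_lacunaryPoint ha hgap⟩
  exact lacunaryPoint_mem_statChar hf ha (strictMono_of_add_two_le hgap) hgrowth
end
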